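/- Let D be a distribution on X × {0,1} with p = Pr_{(x,y)∼D}[y = 1], let F ⊆ {0,1}^X, and let f* ∈ F satisfy L(f*) = inf_{f∈F} L(f). Fix a bag size k ≥ 1, and for f ∈ F define the offset EasyLLP loss on a bag of k i.i.d. draws as g_f(B,α) = (k(2α − 2p) + (2p − 1))·((1/k)·Σ_{j=1}^k (f*(x_j) − f(x_j))), where α = (1/k)·Σ_j y_j. Then for every f ∈ F: E[g_f] = L(f) − L(f*) ≥ 0 and E[g_f²] ≤ 8·k²·L(f*) + 4·k²·E[g_f]. -/

import Mathlib

open MeasureTheory Finset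
open scoped ENNReal NNReal

noncomputable section

namespace LLP

/-- Real value of a Boolean label/prediction (`0` or `1`). -/
def bval (b : Bool) : ℝ := if b then 1 else 0

/-- Label proportion `α` of a bag of `k` labeled examples. -/
def labelProp {X : Type*} {k : ℕ} (bag : Fin k → X × Bool) : ℝ :=
  (∑ j, bval (bag j).2) / (k : ℝ)

/-- Average prediction `(1/k)·Σ_j f(x_j)` of `f` on a bag. -/
def predProp {X : Type*} {k : ℕ} (f : X → Bool) (bag : Fin k → X × Bool) : ℝ :=
  (∑ j, bval (f (bag j).1)) / (k : ℝ)

/-- Instance-level classification loss `L(f) = Pr_{(x,y)∼D}[f(x) ≠ y]`. -/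
def err {X : Type*} [MeasurableSpace X] (D : Measure (X × Bool)) (f : X → Bool) : ℝ :=
  (D {p | f p.1 ≠ p.2}).toReal

/-- `S` is shattered by the Boolean-valued class `F`. -/
def Shatters {Z : Type*} (F : Set (Z → Bool)) (S : Finset Z) : Prop :=
  ∀ T ⊆ S, ∃ f ∈ F, ∀ z ∈ S, (f z = true ↔ z ∈ T)

/-- The VC dimension of `F` is at most `d`. -/
def VCDimLE {Z : Type*} (F : Set (Z → Bool)) (d : ℕ) : Prop :=
  ∀ S : Finset Z, Shatters F S → S.card ≤ d

/-- Joint distribution of `n` i.i.d. bags, each consisting of `k` i.i.d. draws from `D`. -/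
def bagMeasure {X : Type*} [MeasurableSpace X] (D : Measure (X × Bool)) (n k : ℕ) :
    Measure (Fin n → Fin k → X × Bool) :=
  Measure.pi fun _ => Measure.pi fun _ => D

/-- Empirical proportional (0-1) risk: fraction of bags whose predicted proportion
mismatches the observed label proportion. -/
def empPM {X : Type*} {n k : ℕ} (f : X → Bool) (ω : Fin n → Fin k → X × Bool) : ℝ :=
  (∑ i, if predProp f (ω i) = labelProp (ω i) then (0 : ℝ) else 1) / (n : ℝ)

/-- Empirical proportional square loss. -/
def empSQ {X : Type*} {n k : ℕ} (f : X → Bool) (ω : Fin n → Fin k → X × Bool) : ℝ :=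
  (∑ i, (predProp f (ω i) - labelProp (ω i)) ^ 2) / (n : ℝ)

/-- The EasyLLP estimate of the 0-1 loss on a single bag, using marginal label
proportion `p`. -/
def ellEZ {X : Type*} {k : ℕ} (p : ℝ) (f : X → Bool) (bag : Fin k → X × Bool) : ℝ :=
  ((k : ℝ) * (labelProp bag - p) + p) * (1 - predProp f bag)
    + ((k : ℝ) * (p - labelProp bag) + (1 - p)) * predProp f bag

/-- Marginal label proportion `p = Pr[y = 1]`. -/
def labelP {X : Type*} [MeasurableSpace X] (D : Measure (X × Bool)) : ℝ :=
  (D {q | q.2 = true}).toReal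

end LLP

namespace LLP

/-- The offset EasyLLP loss on a single bag:
`g_f(B,α) = (k(2α − 2p) + (2p − 1))·((1/k)·Σ_j (f*(x_j) − f(x_j)))`. -/
def gOffset {X : Type*} {k : ℕ} (p : ℝ) (fs f : X → Bool) (bag : Fin k → X × Bool) : ℝ :=
  ((k : ℝ) * (2 * labelProp bag - 2 * p) + (2 * p - 1)) *
    ((∑ j, (bval (fs (bag j).1) - bval (f (bag j).1))) / (k : ℝ))

/-!
With `φ(x, y) = 2y − 2p` (mean zero, since `p = Pr[y = 1]`) and `d(x, y) = f*(x) − f(x)`, one has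
`k · g_f = (Σ_i φ(q_i) + 2p − 1) · Σ_j d(q_j)`. Off the diagonal the factors `φ(q_i)`, `d(q_j)` are
independent and `φ` is centred, so `E[g_f] = E[(2y − 1) d] = L(f) − L(f*)`, because
`(2y − 1) d = 1[f(x) ≠ y] − 1[f*(x) ≠ y]`. For the second moment, the first factor is at most `2k`
in absolute value and `|Σ_j d(q_j)| ≤ Σ_j |d(q_j)| ≤ k`, so `g_f² ≤ 4k Σ_j |d(q_j)|`, whose mean is
`4k² Pr[f* ≠ f] ≤ 4k² (L(f) + L(f*))`.
-/

open ProbabilityTheory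

section ProductMeasure

variable {ι E : Type*} [Fintype ι] [MeasurableSpace E] {μ : Measure E} [IsProbabilityMeasure μ]
  {φ ψ : E → ℝ}

lemma indepFun_eval_pi {i j : ι} (hij : i ≠ j) :
    (fun ω : ι → E => ω i) ⟂ᵢ[Measure.pi fun _ => μ] fun ω => ω j :=
  (iIndepFun_pi (μ := fun _ : ι => μ) (X := fun _ => id) fun _ => aemeasurable_id).indepFun hij

lemma integral_comp_eval_mul_comp_eval_of_ne (hφ : AEStronglyMeasurable φ μ)
    (hψ : AEStronglyMeasurable ψ μ) {i j : ι} (hij : i ≠ j) :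
    ∫ ω, φ (ω i) * ψ (ω j) ∂Measure.pi (fun _ => μ) = (∫ x, φ x ∂μ) * ∫ x, ψ x ∂μ := by
  rw [(indepFun_eval_pi hij).integral_fun_comp_mul_comp (measurable_pi_apply i).aemeasurable
      (measurable_pi_apply j).aemeasurable, integral_comp_eval hφ, integral_comp_eval hψ]
  all_goals rwa [(measurePreserving_eval _ _).map_eq]

lemma integrable_sum_comp_eval (hφ : Integrable φ μ) :
    Integrable (fun ω => ∑ i, φ (ω i)) (Measure.pi fun _ : ι => μ) :=
  integrable_finsetSum _ fun _ _ => integrable_comp_eval hφ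

lemma integral_sum_comp_eval (hφ : Integrable φ μ) :
    ∫ ω, ∑ i, φ (ω i) ∂Measure.pi (fun _ : ι => μ) = Fintype.card ι * ∫ x, φ x ∂μ := by
  rw [integral_finsetSum _ fun _ _ => integrable_comp_eval hφ]
  simp [integral_comp_eval (μ := fun _ : ι => μ) hφ.1]

lemma integrable_comp_eval_mul_comp_eval (hφ : Integrable φ μ) (hψ : Integrable ψ μ)
    (hφψ : Integrable (φ * ψ) μ) (i j : ι) :
    Integrable (fun ω => φ (ω i) * ψ (ω j)) (Measure.pi fun _ => μ) := by
  rcases eq_or_ne i j with rfl | hij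
  · exact integrable_comp_eval (μ := fun _ => μ) hφψ
  · have hind := (indepFun_eval_pi (μ := μ) hij).comp₀ (measurable_pi_apply i).aemeasurable
      (measurable_pi_apply j).aemeasurable
      (by rw [(measurePreserving_eval _ _).map_eq]; exact hφ.aemeasurable)
      (by rw [(measurePreserving_eval _ _).map_eq]; exact hψ.aemeasurable)
    exact hind.integrable_mul (integrable_comp_eval hφ) (integrable_comp_eval hψ)

lemma integrable_sum_comp_eval_mul_sum_comp_eval (hφ : Integrable φ μ) (hψ : Integrable ψ μ)
    (hφψ : Integrable (φ * ψ) μ) :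
    Integrable (fun ω => (∑ i, φ (ω i)) * ∑ j, ψ (ω j)) (Measure.pi fun _ : ι => μ) := by
  simp_rw [Finset.sum_mul_sum]
  exact integrable_finsetSum _ fun i _ => integrable_finsetSum _ fun j _ =>
    integrable_comp_eval_mul_comp_eval hφ hψ hφψ i j

lemma integral_sum_comp_eval_mul_sum_comp_eval (hφ : Integrable φ μ) (hψ : Integrable ψ μ)
    (hφψ : Integrable (φ * ψ) μ) (hφ0 : ∫ x, φ x ∂μ = 0) :
    ∫ ω, (∑ i, φ (ω i)) * ∑ j, ψ (ω j) ∂Measure.pi (fun _ : ι => μ) =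
      Fintype.card ι * ∫ x, φ x * ψ x ∂μ := by
  have hdiag (i : ι) :
      ∫ ω, ∑ j, φ (ω i) * ψ (ω j) ∂Measure.pi (fun _ : ι => μ) = ∫ x, φ x * ψ x ∂μ := by
    rw [integral_finsetSum _ fun j _ => integrable_comp_eval_mul_comp_eval hφ hψ hφψ i j,
      Finset.sum_eq_single i (fun j _ hji => by
        rw [integral_comp_eval_mul_comp_eval_of_ne hφ.1 hψ.1 hji.symm, hφ0, zero_mul])
        (by simp)]
    exact integral_comp_eval (μ := fun _ => μ) (hφ.1.mul hψ.1)
  simp_rw [Finset.sum_mul_sum]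
  rw [integral_finsetSum _ fun i _ => integrable_finsetSum _ fun j _ =>
    integrable_comp_eval_mul_comp_eval hφ hψ hφψ i j]
  simp [hdiag]

end ProductMeasure

section Bag

variable {X : Type*} {k : ℕ} {p : ℝ} (fs f : X → Bool)

@[fun_prop]
lemma measurable_bval : Measurable bval := .of_discrete

lemma bval_nonneg (b : Bool) : 0 ≤ bval b := by cases b <;> simp [bval]

lemma bval_le_one (b : Bool) : bval b ≤ 1 := by cases b <;> simp [bval]

lemma abs_bval_le_one (b : Bool) : |bval b| ≤ 1 := by cases b <;> simp [bval]

def predDiff (q : X × Bool) : ℝ := bval (fs q.1) - bval (f q.1)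

lemma abs_predDiff (q : X × Bool) :
    |predDiff fs f q| = {q : X × Bool | fs q.1 ≠ f q.1}.indicator 1 q := by
  rcases q with ⟨x, y⟩
  cases hfs : fs x <;> cases hf : f x <;> simp [predDiff, bval, Set.indicator, hfs, hf]

lemma abs_predDiff_le_one (q : X × Bool) : |predDiff fs f q| ≤ 1 := by
  rw [abs_predDiff]
  exact Set.indicator_le_self' (fun _ _ => zero_le_one) q

lemma two_mul_bval_sub_one_mul_predDiff (q : X × Bool) :
    (2 * bval q.2 - 1) * predDiff fs f q =
      {q : X × Bool | f q.1 ≠ q.2}.indicator 1 q - {q : X × Bool | fs q.1 ≠ q.2}.indicator 1 q := by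
  rcases q with ⟨x, y⟩
  cases hfs : fs x <;> cases hf : f x <;> cases y <;>
    norm_num [predDiff, bval, Set.indicator, hfs, hf]

lemma labelProp_nonneg (bag : Fin k → X × Bool) : 0 ≤ labelProp bag :=
  div_nonneg (Finset.sum_nonneg fun _ _ => bval_nonneg _) k.cast_nonneg

lemma labelProp_le_one (bag : Fin k → X × Bool) : labelProp bag ≤ 1 := by
  refine div_le_one_of_le₀ ?_ k.cast_nonneg
  simpa using Finset.sum_le_sum fun j (_ : j ∈ Finset.univ) => bval_le_one (bag j).2

lemma gOffset_eq_sum_mul_sum (hk : k ≠ 0) (bag : Fin k → X × Bool) :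
    gOffset p fs f bag =
      ((∑ i, (2 * bval (bag i).2 - 2 * p)) * ∑ j, predDiff fs f (bag j) +
        (2 * p - 1) * ∑ j, predDiff fs f (bag j)) / k := by
  have hk' : (k : ℝ) ≠ 0 := Nat.cast_ne_zero.2 hk
  simp only [gOffset, labelProp, predDiff, Finset.sum_sub_distrib, ← Finset.mul_sum,
    Finset.sum_const, Finset.card_univ, Fintype.card_fin, nsmul_eq_mul]
  field_simp

/-- The factor `k(2α − 2p) + (2p − 1)` of `gOffset` equals `2kα − 2(k − 1)p − 1`. -/
lemma abs_offsetFactor_le (hk : 1 ≤ k) (hp0 : 0 ≤ p) (hp1 : p ≤ 1) (bag : Fin k → X × Bool) :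
    |(k : ℝ) * (2 * labelProp bag - 2 * p) + (2 * p - 1)| ≤ 2 * k := by
  have hk' : (1 : ℝ) ≤ k := by exact_mod_cast hk
  have hα0 := labelProp_nonneg bag
  have hα1 := labelProp_le_one bag
  rw [abs_le]
  constructor <;> nlinarith

lemma gOffset_sq_le (hp0 : 0 ≤ p) (hp1 : p ≤ 1) (bag : Fin k → X × Bool) :
    gOffset p fs f bag ^ 2 ≤ 4 * k * ∑ j, |predDiff fs f (bag j)| := by
  rcases Nat.eq_zero_or_pos k with rfl | hk
  · simp [gOffset]
  have hk' : (0 : ℝ) < k := by exact_mod_cast hk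
  set S := ∑ j, |predDiff fs f (bag j)|
  have hS_le : S ≤ k := by
    simpa using Finset.sum_le_sum fun j (_ : j ∈ Finset.univ) => abs_predDiff_le_one fs f (bag j)
  have hsum_sq : (∑ j, predDiff fs f (bag j)) ^ 2 ≤ k * S := by
    have h := Finset.abs_sum_le_sum_abs (fun j => predDiff fs f (bag j)) Finset.univ
    rw [← sq_abs]
    nlinarith [abs_nonneg (∑ j, predDiff fs f (bag j))]
  have hA := abs_offsetFactor_le hk hp0 hp1 bag
  have hA_sq : ((k : ℝ) * (2 * labelProp bag - 2 * p) + (2 * p - 1)) ^ 2 ≤ (2 * k) ^ 2 :=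
    sq_le_sq' (abs_le.1 hA).1 (abs_le.1 hA).2
  calc gOffset p fs f bag ^ 2
      = ((k : ℝ) * (2 * labelProp bag - 2 * p) + (2 * p - 1)) ^ 2 *
          (∑ j, predDiff fs f (bag j)) ^ 2 / k ^ 2 := by
        simp only [gOffset, predDiff]; ring
    _ ≤ (2 * k) ^ 2 * (k * S) / k ^ 2 := by gcongr
    _ = 4 * k * S := by field_simp; ring

end Bag

section Expectation

variable {X : Type*} [MeasurableSpace X] {D : Measure (X × Bool)} {fs f : X → Bool}

lemma labelP_nonneg : 0 ≤ labelP D := ENNReal.toReal_nonneg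

lemma labelP_le_one [IsProbabilityMeasure D] : labelP D ≤ 1 := measureReal_le_one

lemma integral_bval_snd : ∫ q, bval q.2 ∂D = labelP D := by
  have h (q : X × Bool) : bval q.2 = {q : X × Bool | q.2 = true}.indicator 1 q := by
    rcases q with ⟨x, _ | _⟩ <;> simp [bval]
  simp_rw [h]
  exact integral_indicator_one (measurable_snd (measurableSet_singleton true))

lemma measurable_predDiff (hfs : Measurable fs) (hf : Measurable f) :
    Measurable (predDiff fs f) := by
  unfold predDiff; fun_prop

lemma integrable_predDiff [IsProbabilityMeasure D] (hfs : Measurable fs) (hf : Measurable f) :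
    Integrable (predDiff fs f) D :=
  .of_bound (measurable_predDiff hfs hf).aestronglyMeasurable 1
    (ae_of_all _ (abs_predDiff_le_one fs f))

lemma integral_two_mul_bval_sub_one_mul_predDiff [IsProbabilityMeasure D]
    (hfs : Measurable fs) (hf : Measurable f) :
    ∫ q, (2 * bval q.2 - 1) * predDiff fs f q ∂D = err D f - err D fs := by
  have hset {g : X → Bool} (hg : Measurable g) : MeasurableSet {q : X × Bool | g q.1 ≠ q.2} :=
    (measurableSet_eq_fun (hg.comp measurable_fst) measurable_snd).compl
  simp_rw [two_mul_bval_sub_one_mul_predDiff]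
  rw [integral_sub ((integrable_indicator_iff (hset hf)).2 (integrable_const 1).integrableOn)
    ((integrable_indicator_iff (hset hfs)).2 (integrable_const 1).integrableOn),
    integral_indicator_one (hset hf), integral_indicator_one (hset hfs)]
  rfl

lemma integral_gOffset [IsProbabilityMeasure D] {k : ℕ} (hk : k ≠ 0) (hfs : Measurable fs)
    (hf : Measurable f) :
    ∫ bag, gOffset (labelP D) fs f bag ∂Measure.pi (fun _ : Fin k => D) = err D f - err D fs := by
  set p := labelP D
  set φ : X × Bool → ℝ := fun q => 2 * bval q.2 - 2 * p
  have hy : Integrable (fun q : X × Bool => bval q.2) D :=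
    .of_bound (by fun_prop) 1 (ae_of_all _ fun q => abs_bval_le_one q.2)
  have hφ : Integrable φ D := (hy.const_mul 2).sub (integrable_const _)
  have hd := integrable_predDiff (D := D) hfs hf
  have hφd : Integrable (fun q => φ q * predDiff fs f q) D :=
    hφ.mul_bdd hd.1 (ae_of_all _ (abs_predDiff_le_one fs f))
  have hφ0 : ∫ q, φ q ∂D = 0 := by
    rw [integral_sub (hy.const_mul 2) (integrable_const _), integral_const_mul, integral_bval_snd]
    simp [p]
  simp_rw [gOffset_eq_sum_mul_sum fs f hk]
  rw [integral_div, integral_add (integrable_sum_comp_eval_mul_sum_comp_eval hφ hd hφd)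
      ((integrable_sum_comp_eval hd).const_mul _),
    integral_sum_comp_eval_mul_sum_comp_eval hφ hd hφd hφ0, integral_const_mul,
    integral_sum_comp_eval hd,
    ← integral_two_mul_bval_sub_one_mul_predDiff hfs hf, Fintype.card_fin]
  have hsplit : ∫ q, (2 * bval q.2 - 1) * predDiff fs f q ∂D =
      ∫ q, φ q * predDiff fs f q ∂D + (2 * p - 1) * ∫ q, predDiff fs f q ∂D := by
    rw [← integral_const_mul, ← integral_add hφd (hd.const_mul _)]
    congr 1 with q
    ring
  rw [hsplit]
  field_simp [Nat.cast_ne_zero.2 hk]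

lemma integral_abs_predDiff (hfs : Measurable fs) (hf : Measurable f) :
    ∫ q, |predDiff fs f q| ∂D = D.real {q | fs q.1 ≠ f q.1} := by
  simp_rw [abs_predDiff]
  exact integral_indicator_one
    (measurableSet_eq_fun (hfs.comp measurable_fst) (hf.comp measurable_fst)).compl

lemma measureReal_ne_le_err_add_err [IsFiniteMeasure D] :
    D.real {q | fs q.1 ≠ f q.1} ≤ err D f + err D fs := by
  have hsub : {q : X × Bool | fs q.1 ≠ f q.1} ⊆ {q | f q.1 ≠ q.2} ∪ {q | fs q.1 ≠ q.2} := by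
    intro q hq
    by_contra h
    simp_all
  exact (measureReal_mono hsub).trans (measureReal_union_le _ _)

lemma integral_gOffset_sq_le [IsProbabilityMeasure D] {k : ℕ} (hfs : Measurable fs)
    (hf : Measurable f) :
    ∫ bag, gOffset (labelP D) fs f bag ^ 2 ∂Measure.pi (fun _ : Fin k => D) ≤
      4 * k ^ 2 * (err D f + err D fs) := by
  have hd := (integrable_predDiff (D := D) hfs hf).abs
  calc ∫ bag, gOffset (labelP D) fs f bag ^ 2 ∂Measure.pi (fun _ : Fin k => D)
      ≤ ∫ bag, 4 * k * ∑ j, |predDiff fs f (bag j)| ∂Measure.pi (fun _ : Fin k => D) :=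
        integral_mono_of_nonneg (ae_of_all _ fun _ => sq_nonneg _)
          ((integrable_sum_comp_eval hd).const_mul _)
          (ae_of_all _ (gOffset_sq_le fs f labelP_nonneg labelP_le_one))
    _ = 4 * k ^ 2 * D.real {q | fs q.1 ≠ f q.1} := by
        rw [integral_const_mul, integral_sum_comp_eval hd, integral_abs_predDiff hfs hf,
          Fintype.card_fin]
        ring
    _ ≤ 4 * k ^ 2 * (err D f + err D fs) := by
        gcongr
        exact measureReal_ne_le_err_add_err

lemma err_le_of_eq_sInf {F : Set (X → Bool)} (hopt : err D fs = sInf (err D '' F)) (hf : f ∈ F) :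
    err D fs ≤ err D f :=
  hopt ▸ csInf_le ⟨0, by rintro _ ⟨g, _, rfl⟩; exact ENNReal.toReal_nonneg⟩ ⟨f, hf, rfl⟩

end Expectation

theorem offset_class_variance_expectation
    (X : Type*) [MeasurableSpace X] (D : Measure (X × Bool)) [IsProbabilityMeasure D]
    (F : Set (X → Bool)) (fs : X → Bool) (hfsm : Measurable fs)
    (hfsopt : err D fs = sInf (err D '' F))
    (k : ℕ) (hk : 1 ≤ k)
    (f : X → Bool) (hfF : f ∈ F) (hfm : Measurable f) :
    (∫ bag, gOffset (labelP D) fs f bag ∂(Measure.pi fun _ : Fin k => D) =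
        err D f - err D fs) ∧
      (0 ≤ ∫ bag, gOffset (labelP D) fs f bag ∂(Measure.pi fun _ : Fin k => D)) ∧
      (∫ bag, (gOffset (labelP D) fs f bag) ^ 2 ∂(Measure.pi fun _ : Fin k => D) ≤
        8 * (k : ℝ) ^ 2 * err D fs +
          4 * (k : ℝ) ^ 2 *
            ∫ bag, gOffset (labelP D) fs f bag ∂(Measure.pi fun _ : Fin k => D)) := by
  have hmean := integral_gOffset (D := D) (Nat.one_le_iff_ne_zero.1 hk) hfsm hfm
  have hopt := err_le_of_eq_sInf hfsopt hfF
  refine ⟨hmean, hmean ▸ sub_nonneg.2 hopt, ?_⟩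
  rw [hmean]
  calc _ ≤ 4 * (k : ℝ) ^ 2 * (err D f + err D fs) := integral_gOffset_sq_le hfsm hfm
    _ = _ := by ring

end LLP
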